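/- The function α : ℝ × [0,∞) → [0,∞] defined by α(j,r) = (j₊)²/r if r > 0, α(j,r) = 0 if j ≤ 0 and r = 0, and α(j,r) = ∞ if j > 0 and r = 0, is jointly convex on ℝ × [0,∞). -/

import Mathlib

/-!
`α` is the (closed) perspective of `j ↦ (j₊)²`, so it is the supremum of the affine functions
`(j, r) ↦ 2 a j - a² r` over `a ≥ 0`: for `r > 0` the supremum is attained at `a = j₊ / r`
(the inequality `2 a j₊ - a² r ≤ j₊² / r` is `(j₊ - a r)² ≥ 0`), and for `r = 0` it is
`sup_{a ≥ 0} 2 a j`, which is `0` or `∞` according to the sign of `j`.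
A supremum of affine functions is convex.
-/

open scoped NNReal

/-- The action density `α(j,r)`. -/
noncomputable def alphaFn (j r : ℝ) : ENNReal :=
  if 0 < r then ENNReal.ofReal ((max j 0) ^ 2 / r)
  else if j ≤ 0 then 0 else ⊤

lemma ENNReal.ofReal_convex_combination_le {l : ℝ} (hl₀ : 0 ≤ l) (hl₁ : l ≤ 1) (x y : ℝ) :
    ENNReal.ofReal (l * x + (1 - l) * y)
      ≤ ENNReal.ofReal l * ENNReal.ofReal x + ENNReal.ofReal (1 - l) * ENNReal.ofReal y := by
  rw [← ENNReal.ofReal_mul hl₀, ← ENNReal.ofReal_mul (sub_nonneg.mpr hl₁)]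
  exact ENNReal.ofReal_add_le

lemma ofReal_le_alphaFn {r : ℝ} (hr : 0 ≤ r) (a : ℝ≥0) (j : ℝ) :
    ENNReal.ofReal (2 * a * j - a ^ 2 * r) ≤ alphaFn j r := by
  unfold alphaFn
  split_ifs with hr₀ hj
  · apply ENNReal.ofReal_le_ofReal
    rw [le_div_iff₀ hr₀]
    have haj : a * j ≤ a * max j 0 := mul_le_mul_of_nonneg_left (le_max_left j 0) a.2
    nlinarith [sq_nonneg (max j 0 - a * r)]
  · have hr₀ : r = 0 := le_antisymm (not_lt.mp hr₀) hr
    rw [hr₀]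
    exact (ENNReal.ofReal_eq_zero.mpr (by nlinarith [a.2])).le
  · exact le_top

lemma alphaFn_eq_iSup {r : ℝ} (hr : 0 ≤ r) (j : ℝ) :
    alphaFn j r = ⨆ a : ℝ≥0, ENNReal.ofReal (2 * a * j - a ^ 2 * r) := by
  refine le_antisymm ?_ (iSup_le fun a => ofReal_le_alphaFn hr a j)
  unfold alphaFn
  split_ifs with hr₀ hj
  · have hmax : max j 0 * j = max j 0 ^ 2 := by
      rcases le_total j 0 with h | h <;> simp [h, sq]
    refine le_iSup_of_le (max j 0 / r).toNNReal (le_of_eq ?_)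
    rw [Real.coe_toNNReal _ (by positivity)]
    congr 1
    field_simp
    linear_combination -2 * hmax
  · exact bot_le
  · have hr₀ : r = 0 := le_antisymm (not_lt.mp hr₀) hr
    have hj : 0 < j := not_le.mp hj
    refine top_le_iff.mpr (ENNReal.eq_top_of_forall_nnreal_le fun b => ?_)
    refine le_iSup_of_le (b / (2 * j)).toNNReal (le_of_eq ?_)
    rw [hr₀, Real.coe_toNNReal _ (by positivity), mul_zero, sub_zero, ← ENNReal.ofReal_coe_nnreal]
    congr 1
    field_simp

theorem stmt_4 :
    ∀ j₁ r₁ j₂ r₂ : ℝ, 0 ≤ r₁ → 0 ≤ r₂ →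
      ∀ l : ℝ, 0 ≤ l → l ≤ 1 →
        alphaFn (l * j₁ + (1 - l) * j₂) (l * r₁ + (1 - l) * r₂)
          ≤ ENNReal.ofReal l * alphaFn j₁ r₁
            + ENNReal.ofReal (1 - l) * alphaFn j₂ r₂ := by
  intro j₁ r₁ j₂ r₂ hr₁ hr₂ l hl₀ hl₁
  have hr : 0 ≤ l * r₁ + (1 - l) * r₂ := by
    have := sub_nonneg.mpr hl₁
    positivity
  rw [alphaFn_eq_iSup hr]
  refine iSup_le fun a => ?_
  calc ENNReal.ofReal (2 * a * (l * j₁ + (1 - l) * j₂) - a ^ 2 * (l * r₁ + (1 - l) * r₂))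
      = ENNReal.ofReal (l * (2 * a * j₁ - a ^ 2 * r₁) + (1 - l) * (2 * a * j₂ - a ^ 2 * r₂)) := by
        ring_nf
    _ ≤ _ := ENNReal.ofReal_convex_combination_le hl₀ hl₁ _ _
    _ ≤ _ := by gcongr <;> apply ofReal_le_alphaFn <;> assumption
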